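/- arXiv:1911.03105 — 2 statements merged into one kernel-verified Lean document; each statement's English description precedes it below -/
import Mathlib

section
/- Let λ > 0 be a real number and m ≥ 1 an integer. If N ~ Poisson(λ), then E[|N − m|] = (m − λ)·(Pr(N ≤ m) − Pr(N ≥ m)) + λ·(Pr(N = m) + Pr(N = m−1)). -/
open scoped BigOperators

/-- The Poisson probability mass function with mean `λ`: `Pr(N = t) = e^{-λ} λ^t / t!`. -/
noncomputable def poissonPMF (lam : ℝ) (t : ℕ) : ℝ := Real.exp (-lam) * lam ^ t / t.factorial

lemma poissonPMF_key (lam : ℝ) (n : ℕ) :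
    ((n + 1 : ℕ) : ℝ) * poissonPMF lam (n + 1) = lam * poissonPMF lam n := by
  have hf : ((n.factorial : ℝ)) ≠ 0 := by positivity
  have h1 : ((n:ℝ) + 1) ≠ 0 := by positivity
  simp only [poissonPMF, Nat.factorial_succ, pow_succ, Nat.cast_mul, Nat.cast_add,
    Nat.cast_one]
  field_simp

/-- If `N ~ Poisson(λ)` and `m ≥ 1`, then
`E[|N - m|] = (m - λ)(Pr(N ≤ m) - Pr(N ≥ m)) + λ(Pr(N = m) + Pr(N = m-1))`. -/
theorem poisson_abs_deviation (lam : ℝ) (hlam : 0 < lam) (m : ℕ) (hm : 1 ≤ m) :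
    ∑' t : ℕ, poissonPMF lam t * |(t : ℝ) - m|
      = ((m : ℝ) - lam) *
          ((∑ t ∈ Finset.range (m + 1), poissonPMF lam t)
            - ∑' t : ℕ, (if m ≤ t then poissonPMF lam t else 0))
        + lam * (poissonPMF lam m + poissonPMF lam (m - 1)) := by
  set p := poissonPMF lam with hp_def
  have hp_nonneg : ∀ t, 0 ≤ p t := by
    intro t
    have : (0:ℝ) < Real.exp (-lam) * lam ^ t / t.factorial := by positivity
    exact this.le
  have hsum : Summable p := by
    have h := (Real.summable_pow_div_factorial lam).mul_left (Real.exp (-lam))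
    refine h.congr fun t => ?_
    simp [hp_def, poissonPMF, mul_div_assoc]
  -- summability of t * p t
  have hsum_t : Summable (fun t : ℕ => (t : ℝ) * p t) := by
    rw [← summable_nat_add_iff 1]
    refine (hsum.mul_left lam).congr fun n => ?_
    exact (poissonPMF_key lam n).symm
  -- summability of tails
  have hge : ∀ k : ℕ, Summable (fun t : ℕ => if k ≤ t then p t else 0) := by
    intro k
    refine Summable.of_nonneg_of_le (fun t => ?_) (fun t => ?_) hsum
    · split_ifs with h
      · exact hp_nonneg t
      · exact le_refl 0
    · split_ifs with h
      · exact le_refl (p t)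
      · exact hp_nonneg t
  -- pieces
  set S : ℝ := ∑ t ∈ Finset.range (m + 1), p t with hS_def
  set T : ℝ := ∑' t : ℕ, (if m ≤ t then p t else 0) with hT_def
  -- the pointwise decomposition of |t - m| * p t
  have habs : ∀ t : ℕ, p t * |(t : ℝ) - m|
      = (if t ≤ m then ((m : ℝ) - t) * p t else 0)
        + (if m ≤ t then ((t : ℝ) - m) * p t else 0) := by
    intro t
    rcases lt_trichotomy t m with h | h | h
    · have hc : ((t : ℝ) - m) < 0 := by
        have : (t : ℝ) < m := by exact_mod_cast h
        linarith
      rw [if_pos h.le, if_neg (by omega), abs_of_neg hc]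
      ring
    · subst h
      simp
    · have hc : (0:ℝ) ≤ (t : ℝ) - m := by
        have : (m : ℝ) ≤ t := by exact_mod_cast h.le
        linarith
      rw [if_neg (by omega), if_pos h.le, abs_of_nonneg hc]
      ring
  -- summability of each piece
  have hSA : Summable (fun t : ℕ => if t ≤ m then ((m : ℝ) - t) * p t else 0) := by
    apply summable_of_ne_finset_zero (s := Finset.range (m + 1))
    intro t ht
    rw [if_neg (by simp only [Finset.mem_range] at ht; omega)]
  have hSB1 : Summable (fun t : ℕ => if m ≤ t then (t : ℝ) * p t else 0) := by
    refine Summable.of_nonneg_of_le (fun t => ?_) (fun t => ?_) hsum_t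
    · split_ifs with h
      · exact mul_nonneg (Nat.cast_nonneg t) (hp_nonneg t)
      · exact le_refl 0
    · split_ifs with h
      · exact le_refl _
      · exact mul_nonneg (Nat.cast_nonneg t) (hp_nonneg t)
  have hSB2 : Summable (fun t : ℕ => if m ≤ t then (m : ℝ) * p t else 0) := by
    refine ((hge m).mul_left (m : ℝ)).congr fun t => ?_
    split_ifs <;> simp
  have hSB : Summable (fun t : ℕ => if m ≤ t then ((t : ℝ) - m) * p t else 0) := by
    refine (hSB1.sub hSB2).congr fun t => ?_
    split_ifs <;> ring
  -- split the tsum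
  have hsplit : ∑' t : ℕ, p t * |(t : ℝ) - m|
      = (∑' t : ℕ, (if t ≤ m then ((m : ℝ) - t) * p t else 0))
        + ∑' t : ℕ, (if m ≤ t then ((t : ℝ) - m) * p t else 0) := by
    rw [← Summable.tsum_add hSA hSB]
    exact tsum_congr habs
  -- value of piece A
  have hA : (∑' t : ℕ, (if t ≤ m then ((m : ℝ) - t) * p t else 0))
      = ((m : ℝ) - lam) * S + lam * p m := by
    rw [tsum_eq_sum (s := Finset.range (m + 1)) (by
      intro t ht
      rw [if_neg (by simp only [Finset.mem_range] at ht; omega)])]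
    have h1 : ∑ t ∈ Finset.range (m + 1), (if t ≤ m then ((m : ℝ) - t) * p t else 0)
        = ∑ t ∈ Finset.range (m + 1), (((m : ℝ) - t) * p t) := by
      refine Finset.sum_congr rfl fun t ht => ?_
      rw [if_pos (by simp only [Finset.mem_range] at ht; omega)]
    rw [h1]
    have h2 : ∑ t ∈ Finset.range (m + 1), (((m : ℝ) - t) * p t)
        = (m : ℝ) * S - ∑ t ∈ Finset.range (m + 1), ((t : ℝ) * p t) := by
      rw [hS_def, Finset.mul_sum, ← Finset.sum_sub_distrib]
      exact Finset.sum_congr rfl fun t _ => by ring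
    rw [h2]
    have h3 : ∑ t ∈ Finset.range (m + 1), ((t : ℝ) * p t)
        = lam * ∑ t ∈ Finset.range m, p t := by
      rw [Finset.sum_range_succ' (fun t => (t : ℝ) * p t) m]
      simp only [Nat.cast_zero, zero_mul, add_zero]
      rw [Finset.mul_sum]
      exact Finset.sum_congr rfl fun n _ => poissonPMF_key lam n
    have h4 : ∑ t ∈ Finset.range m, p t = S - p m := by
      rw [hS_def, Finset.sum_range_succ]; ring
    rw [h3, h4]
    ring
  -- value of piece B
  have hB : (∑' t : ℕ, (if m ≤ t then ((t : ℝ) - m) * p t else 0))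
      = lam * p (m - 1) + (lam - (m : ℝ)) * T := by
    have hsplitB : ∑' t : ℕ, (if m ≤ t then ((t : ℝ) - m) * p t else 0)
        = (∑' t : ℕ, (if m ≤ t then (t : ℝ) * p t else 0))
          - ∑' t : ℕ, (if m ≤ t then (m : ℝ) * p t else 0) := by
      rw [← Summable.tsum_sub hSB1 hSB2]
      refine tsum_congr fun t => ?_
      split_ifs <;> ring
    have hB2 : ∑' t : ℕ, (if m ≤ t then (m : ℝ) * p t else 0) = (m : ℝ) * T := by
      rw [hT_def, ← tsum_mul_left]
      refine tsum_congr fun t => ?_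
      split_ifs <;> simp
    -- B1 via shift
    have hB1 : ∑' t : ℕ, (if m ≤ t then (t : ℝ) * p t else 0)
        = lam * (p (m - 1) + T) := by
      rw [Summable.tsum_eq_zero_add hSB1]
      have h0 : (if m ≤ 0 then ((0:ℕ) : ℝ) * p 0 else 0) = 0 := by
        rw [if_neg (by omega)]
      rw [h0, zero_add]
      have hshift : ∀ n : ℕ, (if m ≤ n + 1 then ((n + 1 : ℕ) : ℝ) * p (n + 1) else 0)
          = lam * (if m - 1 ≤ n then p n else 0) := by
        intro n
        by_cases h : m ≤ n + 1
        · rw [if_pos h, if_pos (by omega)]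
          exact poissonPMF_key lam n
        · rw [if_neg h, if_neg (by omega), mul_zero]
      calc ∑' n : ℕ, (if m ≤ n + 1 then ((n + 1 : ℕ) : ℝ) * p (n + 1) else 0)
          = ∑' n : ℕ, lam * (if m - 1 ≤ n then p n else 0) := tsum_congr hshift
        _ = lam * ∑' n : ℕ, (if m - 1 ≤ n then p n else 0) := tsum_mul_left
        _ = lam * (p (m - 1) + T) := by
            congr 1
            have hdecomp : ∀ n : ℕ, (if m - 1 ≤ n then p n else 0)
                = (if n = m - 1 then p n else 0) + (if m ≤ n then p n else 0) := by
              intro n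
              by_cases h1 : n = m - 1
              · subst h1
                rw [if_pos le_rfl, if_pos rfl, if_neg (by omega), add_zero]
              · by_cases h2 : m ≤ n
                · rw [if_pos (by omega), if_neg h1, if_pos h2, zero_add]
                · rw [if_neg (by omega), if_neg h1, if_neg h2, add_zero]
            have hsingle : Summable (fun n : ℕ => if n = m - 1 then p n else 0) :=
              summable_of_ne_finset_zero (s := {m - 1}) (by
                intro n hn
                rw [if_neg (by simpa using hn)])
            rw [tsum_congr hdecomp, Summable.tsum_add hsingle (hge m)]
            congr 1
            rw [tsum_eq_single (f := fun n : ℕ => if n = m - 1 then p n else 0) (m - 1) fun n hn => if_neg hn]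
            exact if_pos rfl
    rw [hsplitB, hB1, hB2]
    ring
  calc ∑' t : ℕ, p t * |(t : ℝ) - m|
      = (((m : ℝ) - lam) * S + lam * p m) + (lam * p (m - 1) + (lam - (m : ℝ)) * T) := by
        rw [hsplit, hA, hB]
    _ = ((m : ℝ) - lam) * (S - T) + lam * (p m + p (m - 1)) := by ring
end

section
/- Let n ≥ 1 be an integer. If N ~ Poisson(n), then Pr(N = n) + Pr(N = n−1) = 2 e^{−n} n^n / n! ≤ 1/√n. -/
open scoped BigOperators

/-!
At the mean `n` the ratio `Pr(N = t + 1) / Pr(N = t) = n / (t + 1)` equals one for `t = n - 1`, so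
both terms equal `e^{-n} n^n / n!`. Stirling's lower bound `n! ≥ √(2πn) (n/e)^n` makes this at most
`1 / √(2πn)`, and `2 / √(2πn) ≤ 1 / √n` because `π ≥ 2`.
-/

open Real

theorem poissonPMF_succ (lam : ℝ) (t : ℕ) :
    poissonPMF lam (t + 1) = poissonPMF lam t * lam / (t + 1) := by
  simp only [poissonPMF, Nat.factorial_succ, Nat.cast_mul, Nat.cast_succ, pow_succ]
  field_simp

theorem poissonPMF_natCast_pred {n : ℕ} (hn : n ≠ 0) :
    poissonPMF n (n - 1) = poissonPMF n n := by
  obtain ⟨k, rfl⟩ := Nat.exists_eq_succ_of_ne_zero hn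
  have hk : (k : ℝ) + 1 ≠ 0 := k.cast_add_one_ne_zero
  rw [Nat.succ_sub_one, poissonPMF_succ, Nat.cast_succ, mul_div_cancel_right₀ _ hk]

theorem poissonPMF_natCast_self_le {n : ℕ} (hn : n ≠ 0) :
    poissonPMF n n ≤ 1 / √(2 * π * n) := by
  have hstirling := Stirling.le_factorial_stirling n
  have hpow : ((n : ℝ) / exp 1) ^ n = exp (-n) * (n : ℝ) ^ n := by
    rw [div_pow, ← exp_nat_mul, mul_one, exp_neg, div_eq_inv_mul]
  rw [hpow] at hstirling
  rw [poissonPMF, div_le_div_iff₀ (by positivity) (by positivity)]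
  linarith

theorem two_div_sqrt_two_pi_mul_le {x : ℝ} (hx : 0 < x) : 2 / √(2 * π * x) ≤ 1 / √x := by
  have hsqrt : 2 * √x ≤ √(2 * π * x) := by
    rw [show (2 : ℝ) * √x = √(4 * x) by
      rw [sqrt_mul (by norm_num), show (4 : ℝ) = 2 ^ 2 by norm_num, sqrt_sq (by norm_num)]]
    gcongr
    linarith [pi_gt_three]
  rw [div_le_div_iff₀ (by positivity) (by positivity)]
  linarith

/-- If `N ~ Poisson(n)` with `n ≥ 1`, then
`Pr(N = n) + Pr(N = n-1) = 2 e^{-n} n^n / n! ≤ 1/√n`. -/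
theorem poisson_mode_prob (n : ℕ) (hn : 1 ≤ n) :
    poissonPMF (n : ℝ) n + poissonPMF (n : ℝ) (n - 1)
        = 2 * Real.exp (-(n : ℝ)) * (n : ℝ) ^ n / n.factorial
      ∧ 2 * Real.exp (-(n : ℝ)) * (n : ℝ) ^ n / n.factorial ≤ 1 / Real.sqrt n := by
  have hsum : poissonPMF (n : ℝ) n + poissonPMF (n : ℝ) (n - 1)
      = 2 * Real.exp (-(n : ℝ)) * (n : ℝ) ^ n / n.factorial := by
    rw [poissonPMF_natCast_pred (by omega), poissonPMF]
    ring
  refine ⟨hsum, ?_⟩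
  rw [← hsum, poissonPMF_natCast_pred (by omega)]
  calc poissonPMF n n + poissonPMF n n ≤ 2 * (1 / √(2 * π * n)) := by
        linarith [poissonPMF_natCast_self_le (n := n) (by omega)]
    _ = 2 / √(2 * π * n) := mul_one_div _ _
    _ ≤ 1 / √n := two_div_sqrt_two_pi_mul_le (by positivity)
end
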